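/- arXiv:2206.02920 — 4 statements merged into one kernel-verified Lean document; each statement's English description precedes it below -/
import Mathlib

section
/- Let θ_0, θ_j, θ_k ∈ ℝ with θ_j ≠ 1/2 and θ_k ≠ 1/2, and define p_j = θ_0(1 − θ_j) + (1 − θ_0)θ_j, p_k = θ_0(1 − θ_k) + (1 − θ_0)θ_k, p_{jk} = θ_0(1 − θ_j)(1 − θ_k) + (1 − θ_0)θ_j θ_k, a_{jk} = 1 + 4 p_{jk} − 2(p_j + p_k), and c_{jk} = p_j p_k − p_{jk}. Then the set of real solutions x of the quadratic equation a_{jk} (1 − x) x + c_{jk} = 0 is exactly {θ_0, 1 − θ_0}; in particular, if x* solves the equation then so does 1 − x*, and the quadratic determines θ_0 only up to the substitution θ_0 ↦ 1 − θ_0. -/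
/-! In terms of the channel biases `1 - 2θ`, the coefficients are `a = (1 - 2θ_j)(1 - 2θ_k)` and
`c = -a θ_0 (1 - θ_0)`, so the quadratic is `-a (x - θ_0)(x - (1 - θ_0))`; it is invariant under
`x ↦ 1 - x`, and `a ≠ 0` because neither end channel flips with probability exactly `1/2`. -/

theorem setOf_mul_one_sub_mul_add_eq_zero {a c t : ℝ} (ha : a ≠ 0)
    (hc : c = -(a * (t * (1 - t)))) :
    {x : ℝ | a * (1 - x) * x + c = 0} = {t, 1 - t} := by
  ext x
  have factor : a * (1 - x) * x + c = -(a * ((x - t) * (x - (1 - t)))) := by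
    rw [hc]; ring
  simp only [Set.mem_ofPred_eq, Set.mem_insert_iff, Set.mem_singleton_iff, factor, neg_eq_zero,
    mul_eq_zero, ha, false_or, sub_eq_zero]

/-- With θ_j ≠ 1/2, θ_k ≠ 1/2 and the probabilities
p_j = θ_0(1−θ_j) + (1−θ_0)θ_j, p_k = θ_0(1−θ_k) + (1−θ_0)θ_k,
p_{jk} = θ_0(1−θ_j)(1−θ_k) + (1−θ_0)θ_jθ_k, a_{jk} = 1 + 4p_{jk} − 2(p_j + p_k),
c_{jk} = p_j p_k − p_{jk}, the set of real solutions x of a_{jk}(1 − x)x + c_{jk} = 0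
is exactly {θ_0, 1 − θ_0}; in particular if x* is a solution then so is 1 − x*, so the
quadratic determines θ_0 only up to the substitution θ_0 ↦ 1 − θ_0. -/
theorem stmt12 (θ0 θj θk pj pk pjk a c : ℝ)
    (hθj : θj ≠ 1 / 2) (hθk : θk ≠ 1 / 2)
    (hpj : pj = θ0 * (1 - θj) + (1 - θ0) * θj)
    (hpk : pk = θ0 * (1 - θk) + (1 - θ0) * θk)
    (hpjk : pjk = θ0 * (1 - θj) * (1 - θk) + (1 - θ0) * θj * θk)
    (ha : a = 1 + 4 * pjk - 2 * (pj + pk))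
    (hc : c = pj * pk - pjk) :
    {x : ℝ | a * (1 - x) * x + c = 0} = {θ0, 1 - θ0} ∧
    ∀ x : ℝ, a * (1 - x) * x + c = 0 → a * (1 - (1 - x)) * (1 - x) + c = 0 := by
  have ha_eq : a = (1 - 2 * θj) * (1 - 2 * θk) := by
    rw [ha, hpjk, hpj, hpk]; ring
  have hc_eq : c = -(a * (θ0 * (1 - θ0))) := by
    rw [hc, ha_eq, hpjk, hpj, hpk]; ring
  have ha_ne : a ≠ 0 := by
    rw [ha_eq]
    exact mul_ne_zero (fun h => hθj (by linarith)) (fun h => hθk (by linarith))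
  refine ⟨setOf_mul_one_sub_mul_add_eq_zero ha_ne hc_eq, fun x hx => ?_⟩
  linear_combination hx
end

section
/- For every n ≥ 2, every s ∈ {0,1}^{n−1}, and every θ = (θ_0, …, θ_{n−1}) ∈ ℝ^n, the function α(s; θ) = θ_0 ∏_{j=1}^{n−1} [θ_j if s_j = 0 else (1 − θ_j)] + (1 − θ_0) ∏_{j=1}^{n−1} [θ_j if s_j = 1 else (1 − θ_j)] satisfies α(s; θ_0, …, θ_{n−1}) = α(s; 1 − θ_0, …, 1 − θ_{n−1}). Consequently, the two parameter vectors θ and (1 − θ_0, …, 1 − θ_{n−1}) generate identical outcome distributions {α(s)}_{s ∈ {0,1}^{n−1}}, so θ is not identifiable from these distributions. -/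
/-- The outcome probability α(s; θ) of observing flip pattern s ∈ {0,1}^{n−1} at the
end-nodes of a star network with n = m + 1 bit-flip channels, where channel i flips
with probability 1 − θ_i and node j observes F_0 ⊕ F_j:
α(s; θ) = θ_0 ∏_j [θ_j if s_j = 0 else (1−θ_j)]
        + (1−θ_0) ∏_j [θ_j if s_j = 1 else (1−θ_j)]. -/
def alphaStar (m : ℕ) (θ : Fin (m + 1) → ℝ) (s : Fin m → Bool) : ℝ :=
  θ 0 * ∏ j : Fin m, (if s j then 1 - θ j.succ else θ j.succ)
    + (1 - θ 0) * ∏ j : Fin m, (if s j then θ j.succ else 1 - θ j.succ)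

/-- Replacing every θ_i by 1 − θ_i exchanges the two summands of α. -/
theorem alphaStar_one_sub (m : ℕ) (θ : Fin (m + 1) → ℝ) (s : Fin m → Bool) :
    alphaStar m θ s = alphaStar m (fun i => 1 - θ i) s := by
  simp only [alphaStar, sub_sub_cancel]
  ring

theorem alphaStar_not_injective (m : ℕ) :
    ¬ Function.Injective (fun θ : Fin (m + 1) → ℝ => fun s : Fin m → Bool => alphaStar m θ s) := by
  intro hinj
  have h : (0 : Fin (m + 1) → ℝ) = fun i => 1 - (0 : Fin (m + 1) → ℝ) i :=
    hinj (funext (alphaStar_one_sub m 0))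
  simpa using congrFun h 0

theorem stmt14_general (m : ℕ) :
    (∀ (θ : Fin (m + 1) → ℝ) (s : Fin m → Bool),
        alphaStar m θ s = alphaStar m (fun i => 1 - θ i) s) ∧
    ¬ Function.Injective (fun θ : Fin (m + 1) → ℝ => fun s : Fin m → Bool => alphaStar m θ s) :=
  ⟨alphaStar_one_sub m, alphaStar_not_injective m⟩

/-- For every n = m + 1 ≥ 2, every s ∈ {0,1}^{n−1} and every θ ∈ ℝ^n,
α(s; θ) = α(s; 1 − θ), where (1 − θ)_i = 1 − θ_i. Consequently the parameter vectors θ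
and 1 − θ generate identical outcome distributions {α(s)}_s, so the map
θ ↦ (α(s; θ))_s is not injective: θ is not identifiable from these distributions. -/
theorem stmt14 (m : ℕ) (hm : 1 ≤ m) :
    (∀ (θ : Fin (m + 1) → ℝ) (s : Fin m → Bool),
        alphaStar m θ s = alphaStar m (fun i => 1 - θ i) s) ∧
    ¬ Function.Injective (fun θ : Fin (m + 1) → ℝ => fun s : Fin m → Bool => alphaStar m θ s) :=
  stmt14_general m
end

section
/- Let n ≥ 2 and θ_0, …, θ_{n−1} ∈ [0,1]. Let 𝒩 be the n-qubit channel applying the bit-flip channel ℰ_{θ_j}(ρ) = θ_j ρ + (1 − θ_j) X ρ X to qubit j for each j ∈ {1, …, n−1} (and identity on qubit 0). Then 𝒩(θ_0 Φ_{0⋯0}^0 + (1 − θ_0) Φ_{1⋯1}^0) = Σ_{s ∈ {0,1}^{n−1}} α(s) Φ_s^0, where Φ_s^b = |Φ_s^b⟩⟨Φ_s^b| are the n-qubit GHZ projectors and α(s) = θ_0 ∏_{j=1}^{n−1} [θ_j if s_j = 0 else (1 − θ_j)] + (1 − θ_0) ∏_{j=1}^{n−1} [θ_j if s_j = 1 else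 (1 − θ_j)]; thus the resulting GHZ-diagonal state has exactly the same eigenvalue distribution α(s) as the computational-basis scheme. -/
/-!
Conjugation by `X` on qubit `j` flips bit `j` of both `|0 s⟩` and `|1 s̄⟩`, so it maps the
GHZ projector `Φ_s^b` to `Φ_{s'}^b` with `s'` the string `s` with bit `j` flipped. Hence the
bit-flip channel on qubit `j` sends a GHZ-diagonal state `∑ β(s) Φ_s^0` to the GHZ-diagonal
state with coefficients `θ_j β(s) + (1 - θ_j) β(s')`: on the coefficients it acts as classical
bit-flip noise on bit `j`. The input has coefficients `θ_0 δ_{0⋯0} + (1 - θ_0) δ_{1⋯1}`, and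
independent noise on every bit turns the point mass at a constant string `c` into the product
distribution `∏_j [θ_j if s_j = c else 1 - θ_j]`, which gives `α`.
-/

open Matrix

/-- The n-qubit GHZ state |Φ_s^b⟩ = (|0 s⟩ + (−1)^b |1 s̄⟩)/√2, with n = m + 1 qubits;
the n-qubit space (ℂ²)^{⊗n} is identified with functions {0,1}^n → ℂ, a basis index
being the pair of the bit on qubit 0 and the remaining m bits (qubits 1,…,n−1). -/
noncomputable def ghzF (m : ℕ) (s : Fin m → Bool) (b : Bool) :
    Bool × (Fin m → Bool) → ℂ :=
  ((Real.sqrt 2 : ℂ))⁻¹ •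
    ((Pi.single (false, s) 1 : Bool × (Fin m → Bool) → ℂ) +
      ((-1 : ℂ) ^ b.toNat) • (Pi.single (true, fun j => !(s j)) 1 : Bool × (Fin m → Bool) → ℂ))

/-- The n-qubit GHZ projector Φ_s^b = |Φ_s^b⟩⟨Φ_s^b|. -/
noncomputable def ghzProj (m : ℕ) (s : Fin m → Bool) (b : Bool) :
    Matrix (Bool × (Fin m → Bool)) (Bool × (Fin m → Bool)) ℂ :=
  Matrix.vecMulVec (ghzF m s b) (star (ghzF m s b))

open Finset

lemma permMatrix_mul_mul_permMatrix_of_symm_eq {ι R : Type*} [Fintype ι] [DecidableEq ι]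
    [Semiring R] (σ : Equiv.Perm ι) (hσ : σ.symm = σ) (A : Matrix ι ι R) :
    (of fun p q => if p = σ q then 1 else 0) * A * (of fun p q => if p = σ q then (1 : R) else 0)
      = A.submatrix σ σ := by
  have hP : (of fun p q => if p = σ q then (1 : R) else 0) = σ.toPEquiv.toMatrix := by
    ext p q
    have hpq : σ p = q ↔ p = σ q := by rw [← σ.eq_symm_apply, hσ]
    simp [PEquiv.toMatrix_apply, hpq]
  rw [hP, PEquiv.toMatrix_toPEquiv_mul, PEquiv.mul_toMatrix_toPEquiv]
  simp [hσ]

namespace GHZ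

variable {m : ℕ}

def flipBit (j : Fin m) : Equiv.Perm (Fin m → Bool) :=
  Function.Involutive.toPerm (fun s => Function.update s j (!s j)) fun s => by simp

lemma flipBit_apply (j : Fin m) (s : Fin m → Bool) :
    flipBit j s = Function.update s j (!s j) := rfl

lemma flipBit_apply_self (j : Fin m) (s : Fin m → Bool) : flipBit j s j = !s j := by
  simp [flipBit_apply]

lemma flipBit_apply_of_ne {j k : Fin m} (hk : k ≠ j) (s : Fin m → Bool) :
    flipBit j s k = s k := by
  simp [flipBit_apply, Function.update_of_ne hk]

@[simp]
lemma flipBit_flipBit (j : Fin m) (s : Fin m → Bool) : flipBit j (flipBit j s) = s :=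
  (flipBit j).symm_apply_apply s

def flipQubit (j : Fin m) : Equiv.Perm (Bool × (Fin m → Bool)) :=
  Equiv.prodCongr (Equiv.refl Bool) (flipBit j)

lemma flipQubit_symm (j : Fin m) : (flipQubit j).symm = flipQubit j := rfl

lemma flipBit_not (j : Fin m) (s : Fin m → Bool) :
    flipBit j (fun k => !s k) = fun k => !flipBit j s k := by
  ext k
  by_cases hk : k = j
  · subst hk; simp [flipBit_apply_self]
  · simp [flipBit_apply_of_ne hk]

lemma ghzF_comp_flipQubit (j : Fin m) (s : Fin m → Bool) (b : Bool) :
    ghzF m s b ∘ flipQubit j = ghzF m (flipBit j s) b := by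
  ext p
  have h0 : flipQubit j p = (false, s) ↔ p = (false, flipBit j s) := by
    rw [← Equiv.eq_symm_apply, flipQubit_symm]; rfl
  have h1 : flipQubit j p = (true, fun k => !s k) ↔ p = (true, fun k => !flipBit j s k) := by
    rw [← Equiv.eq_symm_apply, flipQubit_symm, ← flipBit_not]; rfl
  simp only [ghzF, Function.comp_apply, Pi.smul_apply, Pi.add_apply, Pi.single_apply, h0, h1]

lemma ghzProj_submatrix_flipQubit (j : Fin m) (s : Fin m → Bool) (b : Bool) :
    (ghzProj m s b).submatrix (flipQubit j) (flipQubit j) = ghzProj m (flipBit j s) b := by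
  ext p q
  simp only [ghzProj, submatrix_apply, vecMulVec_apply, Pi.star_apply, ← ghzF_comp_flipQubit,
    Function.comp_apply]

noncomputable def ghzDiag (m : ℕ) (b : Bool) (β : (Fin m → Bool) → ℝ) :
    Matrix (Bool × (Fin m → Bool)) (Bool × (Fin m → Bool)) ℂ :=
  ∑ s, (β s : ℂ) • ghzProj m s b

/-- The action of the bit-flip channel on qubit `j` on the coefficients of a GHZ-diagonal state. -/
def flipNoise (θ : ℝ) (j : Fin m) : ((Fin m → Bool) → ℝ) →ₗ[ℝ] ((Fin m → Bool) → ℝ) :=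
  θ • LinearMap.id + (1 - θ) • LinearMap.funLeft ℝ ℝ (flipBit j)

lemma flipNoise_apply (θ : ℝ) (j : Fin m) (β : (Fin m → Bool) → ℝ) (s : Fin m → Bool) :
    flipNoise θ j β s = θ * β s + (1 - θ) * β (flipBit j s) := rfl

lemma ghzDiag_submatrix_flipQubit (j : Fin m) (b : Bool) (β : (Fin m → Bool) → ℝ) :
    (ghzDiag m b β).submatrix (flipQubit j) (flipQubit j) = ghzDiag m b (β ∘ flipBit j) :=
  calc _ = ∑ s, (β s : ℂ) • ghzProj m (flipBit j s) b := by
        ext p q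
        simp only [ghzDiag, ← ghzProj_submatrix_flipQubit, submatrix_apply, Matrix.sum_apply,
          Matrix.smul_apply]
    _ = _ := by
        rw [ghzDiag, ← Equiv.sum_comp (flipBit j)]
        simp only [Function.comp_apply, flipBit_flipBit]

lemma ghzDiag_flipNoise (θ : ℝ) (j : Fin m) (b : Bool) (β : (Fin m → Bool) → ℝ) :
    ghzDiag m b (flipNoise θ j β) = (θ : ℂ) • ghzDiag m b β
        + ((1 - θ : ℝ) : ℂ) • (ghzDiag m b β).submatrix (flipQubit j) (flipQubit j) := by
  rw [ghzDiag_submatrix_flipQubit]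
  simp only [ghzDiag, smul_sum, smul_smul, ← sum_add_distrib, ← add_smul, flipNoise_apply,
    Function.comp_apply]
  push_cast
  rfl

/-- The probability that the constant string `c` becomes `s` when each bit `k ∈ T` is flipped
independently with probability `1 - θ k`. -/
def noisyWeight (θ : Fin m → ℝ) (T : Finset (Fin m)) (c : Bool) (s : Fin m → Bool) : ℝ :=
  ∏ k, if s k = c then (if k ∈ T then θ k else 1) else (if k ∈ T then 1 - θ k else 0)

lemma flipNoise_noisyWeight (θ : Fin m → ℝ) {j : Fin m} {T : Finset (Fin m)} (hj : j ∉ T)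
    (c : Bool) : flipNoise (θ j) j (noisyWeight θ T c) = noisyWeight θ (insert j T) c := by
  ext s
  simp only [flipNoise_apply, noisyWeight, Fintype.prod_eq_mul_prod_compl j]
  have hrest : ∀ t : Fin m → Bool, (∀ k ≠ j, t k = s k) →
      ∏ k ∈ {j}ᶜ, (if t k = c then (if k ∈ T then θ k else 1) else (if k ∈ T then 1 - θ k else 0))
        = ∏ k ∈ {j}ᶜ, (if s k = c then (if k ∈ insert j T then θ k else 1)
            else (if k ∈ insert j T then 1 - θ k else 0)) := by
    intro t ht
    refine prod_congr rfl fun k hk => ?_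
    have hkj : k ≠ j := by simpa using hk
    simp [ht k hkj, hkj]
  rw [hrest s fun _ _ => rfl, hrest (flipBit j s) fun k hk => flipBit_apply_of_ne hk s,
    flipBit_apply_self]
  cases s j <;> cases c <;> simp [hj]

lemma foldr_flipNoise_noisyWeight (θ : Fin m → ℝ) {l : List (Fin m)} (hl : l.Nodup) (a₀ a₁ : ℝ) :
    l.foldr (fun j => flipNoise (θ j) j) (a₀ • noisyWeight θ ∅ false + a₁ • noisyWeight θ ∅ true)
      = a₀ • noisyWeight θ l.toFinset false + a₁ • noisyWeight θ l.toFinset true := by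
  induction l with
  | nil => rfl
  | cons j l ih =>
    obtain ⟨hj, hl⟩ := List.nodup_cons.mp hl
    have hj' : j ∉ l.toFinset := by simpa using hj
    simp only [List.foldr_cons, ih hl, map_add, map_smul, flipNoise_noisyWeight θ hj',
      List.toFinset_cons]

lemma noisyWeight_empty (θ : Fin m → ℝ) (c : Bool) (s : Fin m → Bool) :
    noisyWeight θ ∅ c s = if s = fun _ => c then 1 else 0 := by
  simp [noisyWeight, prod_boole, funext_iff]

lemma noisyWeight_univ (θ : Fin m → ℝ) (c : Bool) (s : Fin m → Bool) :
    noisyWeight θ univ c s = ∏ k, if s k = c then θ k else 1 - θ k := by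
  simp [noisyWeight]

lemma ghzDiag_noisyWeight_empty (θ : Fin m → ℝ) (b : Bool) (a₀ a₁ : ℝ) :
    ghzDiag m b (a₀ • noisyWeight θ ∅ false + a₁ • noisyWeight θ ∅ true)
      = (a₀ : ℂ) • ghzProj m (fun _ => false) b + (a₁ : ℂ) • ghzProj m (fun _ => true) b := by
  simp [ghzDiag, noisyWeight_empty, add_smul, sum_add_distrib, ite_smul]

lemma foldr_ghzDiag {chan : Fin m → Matrix (Bool × (Fin m → Bool)) (Bool × (Fin m → Bool)) ℂ →
      Matrix (Bool × (Fin m → Bool)) (Bool × (Fin m → Bool)) ℂ} {θ : Fin m → ℝ} {b : Bool}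
    (hchan : ∀ j β, chan j (ghzDiag m b β) = ghzDiag m b (flipNoise (θ j) j β))
    (l : List (Fin m)) (β : (Fin m → Bool) → ℝ) :
    l.foldr (fun j f => chan j ∘ f) id (ghzDiag m b β)
      = ghzDiag m b (l.foldr (fun j => flipNoise (θ j) j) β) := by
  induction l with
  | nil => rfl
  | cons j l ih => simp only [List.foldr_cons, Function.comp_apply, ih, hchan]

end GHZ

open GHZ

theorem stmt17_general (m : ℕ) (θ0 : ℝ) (θ : Fin m → ℝ)
    (X : Fin m → Matrix (Bool × (Fin m → Bool)) (Bool × (Fin m → Bool)) ℂ)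
    (hX : ∀ j, X j = Matrix.of fun p q =>
      if p = (q.1, Function.update q.2 j (!(q.2 j))) then 1 else 0)
    (chan : Fin m → Matrix (Bool × (Fin m → Bool)) (Bool × (Fin m → Bool)) ℂ →
      Matrix (Bool × (Fin m → Bool)) (Bool × (Fin m → Bool)) ℂ)
    (hchan : ∀ j ρ, chan j ρ = (θ j : ℂ) • ρ + ((1 - θ j : ℝ) : ℂ) • (X j * ρ * X j)) :
    ∀ l : List (Fin m), l.Perm (List.finRange m) →
      (l.foldr (fun j f => chan j ∘ f) id)
          ((θ0 : ℂ) • ghzProj m (fun _ => false) false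
            + ((1 - θ0 : ℝ) : ℂ) • ghzProj m (fun _ => true) false)
        = ∑ s : Fin m → Bool,
            ((θ0 * ∏ j, (if s j then 1 - θ j else θ j)
              + (1 - θ0) * ∏ j, (if s j then θ j else 1 - θ j) : ℝ) : ℂ)
              • ghzProj m s false := by
  intro l hl
  have hchan_ghzDiag : ∀ j β,
      chan j (ghzDiag m false β) = ghzDiag m false (flipNoise (θ j) j β) := by
    intro j β
    have hXj : X j = of fun p q => if p = flipQubit j q then 1 else 0 := hX j
    rw [hchan, hXj, permMatrix_mul_mul_permMatrix_of_symm_eq _ (flipQubit_symm j),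
      ← ghzDiag_flipNoise]
  have hl_univ : l.toFinset = univ := by
    ext j
    simp [hl.mem_iff]
  rw [← ghzDiag_noisyWeight_empty θ, foldr_ghzDiag hchan_ghzDiag,
    foldr_flipNoise_noisyWeight θ (hl.nodup_iff.mpr (List.nodup_finRange m)), hl_univ, ghzDiag]
  refine sum_congr rfl fun s _ => ?_
  have hfalse : ∀ k, (if s k = false then θ k else 1 - θ k) = if s k then 1 - θ k else θ k :=
    fun k => by cases s k <;> rfl
  simp only [Pi.add_apply, Pi.smul_apply, smul_eq_mul, noisyWeight_univ, hfalse]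

/-- Let n = m + 1 ≥ 2 and θ_0, …, θ_{n−1} ∈ [0,1]. Let 𝒩 be the n-qubit
channel applying the bit-flip channel ℰ_{θ_j}(ρ) = θ_j ρ + (1 − θ_j) X ρ X to qubit j
for j = 1, …, n−1 (identity on qubit 0), the commuting maps composed in any order.
Then 𝒩(θ_0 Φ_{0⋯0}^0 + (1 − θ_0) Φ_{1⋯1}^0) = Σ_s α(s) Φ_s^0, with
α(s) = θ_0 ∏_j [θ_j if s_j = 0 else (1−θ_j)] + (1−θ_0) ∏_j [θ_j if s_j = 1 else (1−θ_j)]: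
the GHZ-diagonal output has the same eigenvalue distribution as the computational-basis
scheme. -/
theorem stmt17 (m : ℕ) (hm : 1 ≤ m) (θ0 : ℝ) (θ : Fin m → ℝ)
    (hθ0 : θ0 ∈ Set.Icc (0 : ℝ) 1) (hθ : ∀ j, θ j ∈ Set.Icc (0 : ℝ) 1)
    (X : Fin m → Matrix (Bool × (Fin m → Bool)) (Bool × (Fin m → Bool)) ℂ)
    (hX : ∀ j, X j = Matrix.of fun p q =>
      if p = (q.1, Function.update q.2 j (!(q.2 j))) then 1 else 0)
    (chan : Fin m → Matrix (Bool × (Fin m → Bool)) (Bool × (Fin m → Bool)) ℂ →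
      Matrix (Bool × (Fin m → Bool)) (Bool × (Fin m → Bool)) ℂ)
    (hchan : ∀ j ρ, chan j ρ = (θ j : ℂ) • ρ + ((1 - θ j : ℝ) : ℂ) • (X j * ρ * X j)) :
    ∀ l : List (Fin m), l.Perm (List.finRange m) →
      (l.foldr (fun j f => chan j ∘ f) id)
          ((θ0 : ℂ) • ghzProj m (fun _ => false) false
            + ((1 - θ0 : ℝ) : ℂ) • ghzProj m (fun _ => true) false)
        = ∑ s : Fin m → Bool,
            ((θ0 * ∏ j, (if s j then 1 - θ j else θ j)
              + (1 - θ0) * ∏ j, (if s j then θ j else 1 - θ j) : ℝ) : ℂ)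
              • ghzProj m s false :=
  stmt17_general m θ0 θ X hX chan hchan
end

section
/- Let n ≥ 2 and θ_0, …, θ_{n−1} ∈ [0,1], and let ρ(θ) = Σ_{s ∈ {0,1}^{n−1}} β(s) (θ_0 Φ_s^0 + (1 − θ_0) Φ_s^1) with β(s) = ∏_{j=1}^{n−1} [θ_j if s_j = 0 else (1 − θ_j)]. Then the GHZ-basis measurement probabilities satisfy Tr(ρ(θ) Φ_s^b) = β(s) · θ_0 if b = 0 and β(s) · (1 − θ_0) if b = 1; moreover θ_0 = Σ_s Tr(ρ(θ) Φ_s^0) and, for each j ∈ {1, …, n−1}, θ_j = Σ_{b ∈ {0,1}} Σ_{s : s_j = 0} Tr(ρ(θ) Φ_s^b). Consequently the map θ ↦ (Tr(ρ(θ) Φ_s^b))_{s,b} is injective on [0,1]^n, i.e., the GHZ-basis measurement statistics identify all n channel parameters. -/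
/-!
The GHZ vectors are orthonormal and ρ(θ) is diagonal in the GHZ basis, so each measurement
probability Tr(ρ(θ) Φ_s^b) is the corresponding eigenvalue β(s)·θ_0 or β(s)·(1 − θ_0).
Since β is the law of independent bits, summing these over all s, or over the s with s_j = 0,
marginalises to θ_0 and θ_j; these recovery formulas give injectivity.
-/

open Matrix

/-- β(s) = ∏_{j=1}^{n−1} [θ_j if s_j = 0 else (1 − θ_j)], the probability of flip
pattern s on channels 1, …, n−1. -/
def betaStar (m : ℕ) (θ : Fin m → ℝ) (s : Fin m → Bool) : ℝ :=
  ∏ j, (if s j then 1 - θ j else θ j)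

/-- The GHZ-diagonal state ρ(θ) = Σ_s β(s) (θ_0 Φ_s^0 + (1 − θ_0) Φ_s^1). -/
noncomputable def rhoGHZ (m : ℕ) (θ0 : ℝ) (θ : Fin m → ℝ) :
    Matrix (Bool × (Fin m → Bool)) (Bool × (Fin m → Bool)) ℂ :=
  ∑ s : Fin m → Bool,
    ((betaStar m θ s : ℝ) : ℂ) •
      ((θ0 : ℂ) • ghzProj m s false + ((1 - θ0 : ℝ) : ℂ) • ghzProj m s true)

theorem trace_vecMulVec_mul_vecMulVec {n R : Type*} [Fintype n] [CommSemiring R]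
    (u v w x : n → R) :
    (vecMulVec u v * vecMulVec w x).trace = (v ⬝ᵥ w) * (u ⬝ᵥ x) := by
  rw [vecMulVec_mul_vecMulVec, trace_vecMulVec, dotProduct_smul, smul_eq_mul]

theorem trace_sum_smul_vecMulVec_mul_vecMulVec {ι n R : Type*} [Fintype ι] [DecidableEq ι]
    [Fintype n] [CommSemiring R] [Star R]
    (ψ : ι → n → R) (hψ : ∀ i j, star (ψ i) ⬝ᵥ ψ j = if i = j then 1 else 0)
    (w : ι → R) (j : ι) :
    ((∑ i, w i • vecMulVec (ψ i) (star (ψ i))) * vecMulVec (ψ j) (star (ψ j))).trace = w j := by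
  simp only [Finset.sum_mul, trace_sum, smul_mul_assoc, trace_smul,
    trace_vecMulVec_mul_vecMulVec, hψ, smul_eq_mul, ite_mul, one_mul, zero_mul, mul_ite,
    mul_zero, Finset.sum_ite_eq', Finset.mem_univ, if_true]
  rw [dotProduct_comm, hψ, if_pos rfl, mul_one]

theorem sum_filter_eq_false_prod_apply {ι R : Type*} [Fintype ι] [DecidableEq ι]
    [CommSemiring R]
    (f : ι → Bool → R) (j : ι) :
    ∑ s ∈ Finset.univ.filter (fun s : ι → Bool => s j = false), ∏ k, f k (s k)
      = ∏ k, (if k = j then f k false else f k false + f k true) := by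
  have hind : ∀ s : ι → Bool, (if s j = false then ∏ k, f k (s k) else 0)
      = ∏ k, (if k = j ∧ s k = true then 0 else f k (s k)) := by
    intro s
    cases hs : s j
    · refine (Finset.prod_congr rfl fun k _ => ?_).symm
      rw [if_neg]; rintro ⟨rfl, h⟩; simp [hs] at h
    · exact (Finset.prod_eq_zero (Finset.mem_univ j) (by simp [hs])).symm
  rw [Finset.sum_filter, Finset.sum_congr rfl fun s _ => hind s,
    ← Fintype.prod_sum (fun k b => if k = j ∧ b = true then 0 else f k b)]
  refine Finset.prod_congr rfl fun k _ => ?_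
  by_cases hk : k = j
  · simp [hk]
  · simp [hk, add_comm]

theorem ghzF_apply_false (m : ℕ) (s t : Fin m → Bool) (b : Bool) :
    ghzF m s b (false, t) = if t = s then ((Real.sqrt 2 : ℂ))⁻¹ else 0 := by
  simp [ghzF, Pi.single_apply]

theorem ghzF_apply_true (m : ℕ) (s t : Fin m → Bool) (b : Bool) :
    ghzF m s b (true, t)
      = if t = (fun j => !(s j)) then ((Real.sqrt 2 : ℂ))⁻¹ * (-1) ^ b.toNat else 0 := by
  simp [ghzF, Pi.single_apply]

theorem star_ghzF_dotProduct_ghzF (m : ℕ) (s s' : Fin m → Bool) (b b' : Bool) :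
    star (ghzF m s b) ⬝ᵥ ghzF m s' b' = if (s, b) = (s', b') then 1 else 0 := by
  have hc : ((Real.sqrt 2 : ℂ))⁻¹ * ((Real.sqrt 2 : ℂ))⁻¹ = 2⁻¹ := by
    rw [← mul_inv, ← Complex.ofReal_mul, Real.mul_self_sqrt zero_le_two, Complex.ofReal_ofNat]
  have hnot : ((fun j => !(s' j)) = fun j => !(s j)) ↔ s' = s := by
    simp [funext_iff]
  simp only [dotProduct, Fintype.sum_prod_type, Fintype.sum_bool, Pi.star_apply,
    ghzF_apply_false, ghzF_apply_true]
  simp only [apply_ite star, star_zero, star_mul', star_inv₀, Complex.star_def,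
    Complex.conj_ofReal, star_pow, star_neg, star_one, ite_mul, mul_ite, zero_mul, mul_zero,
    Finset.sum_ite_eq', Finset.mem_univ, if_true, hnot, Prod.mk.injEq]
  rcases eq_or_ne s' s with rfl | hs
  · cases b <;> cases b' <;> norm_num [hc]
  · simp [hs, Ne.symm hs]

theorem rhoGHZ_eq_sum (m : ℕ) (θ0 : ℝ) (θ : Fin m → ℝ) :
    rhoGHZ m θ0 θ = ∑ p : (Fin m → Bool) × Bool,
      ((betaStar m θ p.1 * (if p.2 then 1 - θ0 else θ0) : ℝ) : ℂ) •
        vecMulVec (ghzF m p.1 p.2) (star (ghzF m p.1 p.2)) := by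
  rw [rhoGHZ, Fintype.sum_prod_type]
  refine Finset.sum_congr rfl fun s _ => ?_
  simp only [Fintype.sum_bool, ghzProj, smul_add, smul_smul, if_true, Bool.false_eq_true,
    if_false, Complex.ofReal_mul]
  abel

theorem trace_rhoGHZ_mul_ghzProj (m : ℕ) (θ0 : ℝ) (θ : Fin m → ℝ) (s : Fin m → Bool)
    (b : Bool) :
    (rhoGHZ m θ0 θ * ghzProj m s b).trace
      = ((betaStar m θ s * (if b then 1 - θ0 else θ0) : ℝ) : ℂ) := by
  have h := trace_sum_smul_vecMulVec_mul_vecMulVec (fun p => ghzF m p.1 p.2)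
    (fun p q => by simp only [star_ghzF_dotProduct_ghzF, Prod.mk.eta])
    (fun p => ((betaStar m θ p.1 * (if p.2 then 1 - θ0 else θ0) : ℝ) : ℂ)) (s, b)
  rw [rhoGHZ_eq_sum, ghzProj]
  exact h

theorem sum_betaStar (m : ℕ) (θ : Fin m → ℝ) : ∑ s, betaStar m θ s = 1 := by
  simp only [betaStar]
  rw [← Fintype.prod_sum (fun j (b : Bool) => if b then 1 - θ j else θ j)]
  simp

theorem sum_betaStar_filter (m : ℕ) (θ : Fin m → ℝ) (j : Fin m) :
    ∑ s ∈ Finset.univ.filter (fun s : Fin m → Bool => s j = false), betaStar m θ s = θ j := by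
  simp only [betaStar]
  rw [sum_filter_eq_false_prod_apply (fun j (b : Bool) => if b then 1 - θ j else θ j)]
  simp

theorem sum_trace_rhoGHZ_mul_ghzProj_false (m : ℕ) (θ0 : ℝ) (θ : Fin m → ℝ) :
    ∑ s, (rhoGHZ m θ0 θ * ghzProj m s false).trace = θ0 := by
  simp only [trace_rhoGHZ_mul_ghzProj, Bool.false_eq_true, if_false]
  exact_mod_cast by rw [← Finset.sum_mul, sum_betaStar, one_mul]

theorem sum_sum_filter_trace_rhoGHZ_mul_ghzProj (m : ℕ) (θ0 : ℝ) (θ : Fin m → ℝ)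
    (j : Fin m) :
    ∑ b : Bool, ∑ s ∈ Finset.univ.filter (fun s : Fin m → Bool => s j = false),
      (rhoGHZ m θ0 θ * ghzProj m s b).trace = θ j := by
  simp only [trace_rhoGHZ_mul_ghzProj, Fintype.sum_bool, if_true, Bool.false_eq_true, if_false]
  exact_mod_cast by rw [← Finset.sum_mul, ← Finset.sum_mul, sum_betaStar_filter]; ring

theorem stmt19_general (m : ℕ) :
    (∀ (θ0 : ℝ) (θ : Fin m → ℝ), θ0 ∈ Set.Icc (0 : ℝ) 1 → (∀ j, θ j ∈ Set.Icc (0 : ℝ) 1) →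
      (∀ (s : Fin m → Bool) (b : Bool),
        (rhoGHZ m θ0 θ * ghzProj m s b).trace
          = ((betaStar m θ s * (if b then 1 - θ0 else θ0) : ℝ) : ℂ)) ∧
      ((θ0 : ℂ) = ∑ s : Fin m → Bool, (rhoGHZ m θ0 θ * ghzProj m s false).trace) ∧
      (∀ j : Fin m, (θ j : ℂ) =
        ∑ b : Bool, ∑ s ∈ Finset.univ.filter (fun s : Fin m → Bool => s j = false),
          (rhoGHZ m θ0 θ * ghzProj m s b).trace)) ∧
    Set.InjOn
      (fun q : ℝ × (Fin m → ℝ) =>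
        fun p : (Fin m → Bool) × Bool => (rhoGHZ m q.1 q.2 * ghzProj m p.1 p.2).trace)
      {q : ℝ × (Fin m → ℝ) | q.1 ∈ Set.Icc (0 : ℝ) 1 ∧ ∀ j, q.2 j ∈ Set.Icc (0 : ℝ) 1} := by
  refine ⟨fun θ0 θ _ _ => ⟨trace_rhoGHZ_mul_ghzProj m θ0 θ,
    (sum_trace_rhoGHZ_mul_ghzProj_false m θ0 θ).symm,
    fun j => (sum_sum_filter_trace_rhoGHZ_mul_ghzProj m θ0 θ j).symm⟩, ?_⟩
  intro q _ q' _ hq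
  have hstat : ∀ s b, (rhoGHZ m q.1 q.2 * ghzProj m s b).trace
      = (rhoGHZ m q'.1 q'.2 * ghzProj m s b).trace := fun s b => congrFun hq (s, b)
  have h0 := sum_trace_rhoGHZ_mul_ghzProj_false m q.1 q.2
  have hj := sum_sum_filter_trace_rhoGHZ_mul_ghzProj m q.1 q.2
  simp only [hstat, sum_trace_rhoGHZ_mul_ghzProj_false,
    sum_sum_filter_trace_rhoGHZ_mul_ghzProj] at h0 hj
  exact Prod.ext (by exact_mod_cast h0.symm) (funext fun j => by exact_mod_cast (hj j).symm)

/-- For n = m + 1 ≥ 2 and θ_0, …, θ_{n−1} ∈ [0,1], the GHZ-basis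
measurement statistics of ρ(θ) = Σ_s β(s)(θ_0 Φ_s^0 + (1 − θ_0) Φ_s^1) satisfy
Tr(ρ(θ) Φ_s^b) = β(s)·θ_0 for b = 0 and β(s)·(1 − θ_0) for b = 1; moreover
θ_0 = Σ_s Tr(ρ(θ) Φ_s^0) and θ_j = Σ_b Σ_{s : s_j = 0} Tr(ρ(θ) Φ_s^b) for each j, so
the map θ ↦ (Tr(ρ(θ) Φ_s^b))_{s,b} is injective on [0,1]^n: the GHZ-basis measurement
statistics identify all n channel parameters. -/
theorem stmt19 (m : ℕ) (hm : 1 ≤ m) :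
    (∀ (θ0 : ℝ) (θ : Fin m → ℝ), θ0 ∈ Set.Icc (0 : ℝ) 1 → (∀ j, θ j ∈ Set.Icc (0 : ℝ) 1) →
      (∀ (s : Fin m → Bool) (b : Bool),
        (rhoGHZ m θ0 θ * ghzProj m s b).trace
          = ((betaStar m θ s * (if b then 1 - θ0 else θ0) : ℝ) : ℂ)) ∧
      ((θ0 : ℂ) = ∑ s : Fin m → Bool, (rhoGHZ m θ0 θ * ghzProj m s false).trace) ∧
      (∀ j : Fin m, (θ j : ℂ) =
        ∑ b : Bool, ∑ s ∈ Finset.univ.filter (fun s : Fin m → Bool => s j = false),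
          (rhoGHZ m θ0 θ * ghzProj m s b).trace)) ∧
    Set.InjOn
      (fun q : ℝ × (Fin m → ℝ) =>
        fun p : (Fin m → Bool) × Bool => (rhoGHZ m q.1 q.2 * ghzProj m p.1 p.2).trace)
      {q : ℝ × (Fin m → ℝ) | q.1 ∈ Set.Icc (0 : ℝ) 1 ∧ ∀ j, q.2 j ∈ Set.Icc (0 : ℝ) 1} :=
  stmt19_general m
end
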